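/- arXiv:math/0502379 — 5 statements merged into one kernel-verified Lean document; each statement's English description precedes it below -/
import Mathlib

section
/- For a positive integer n, 2^n - 1 equals the product over all odd primes p with v(p) ∣ n of p^{ε(p) + ord_p(n)}. -/
noncomputable def wieferichExp (p : ℕ) : ℕ := (2 ^ orderOf (2 : ZMod p) - 1).factorization p

theorem Nat.dvd_pow_sub_one_iff_natCast_pow_eq_one {a : ℕ} (ha : 0 < a) (m k : ℕ) :
    m ∣ a ^ k - 1 ↔ (a : ZMod m) ^ k = 1 := by
  rw [← Nat.modEq_iff_dvd' (Nat.one_le_pow _ _ ha), ← ZMod.natCast_eq_natCast_iff, eq_comm]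
  push_cast
  rfl

theorem ZMod.not_dvd_orderOf {p : ℕ} [hp : Fact p.Prime] {a : ZMod p} (ha : a ≠ 0) :
    ¬ p ∣ orderOf a := by
  intro h
  have hp1 := hp.out.one_lt
  have : p - 1 = 0 :=
    Nat.eq_zero_of_dvd_of_lt (h.trans (ZMod.orderOf_dvd_card_sub_one ha)) (by omega)
  omega

/-- Lifting the exponent applied to `a ^ n = (a ^ v) ^ (n / v)`, with `v` the order of `a`
modulo `p`; `v` contributes nothing since `v ∣ p - 1`. -/
theorem Nat.factorization_pow_sub_one_of_orderOf_dvd {p a n : ℕ} [hp : Fact p.Prime]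
    (hp_odd : Odd p) (ha : 1 < a) (hpa : ¬ p ∣ a) (hn : orderOf (a : ZMod p) ∣ n) (hn0 : n ≠ 0) :
    (a ^ n - 1).factorization p =
      (a ^ orderOf (a : ZMod p) - 1).factorization p + n.factorization p := by
  set v := orderOf (a : ZMod p)
  obtain ⟨m, rfl⟩ := hn
  have hv : v ≠ 0 := left_ne_zero_of_mul hn0
  have hm : m ≠ 0 := right_ne_zero_of_mul hn0
  have ha0 : (a : ZMod p) ≠ 0 := by rwa [Ne, ZMod.natCast_eq_zero_iff]
  have hp_dvd : p ∣ a ^ v - 1 :=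
    (Nat.dvd_pow_sub_one_iff_natCast_pow_eq_one (by omega) p v).mpr (pow_orderOf_eq_one _)
  have hp_not_dvd : ¬ p ∣ a ^ v := fun h => hpa (hp.out.dvd_of_dvd_pow h)
  have lte := padicValNat.pow_sub_pow hp_odd (Nat.one_lt_pow hv ha) hp_dvd hp_not_dvd hm
  rw [one_pow, ← pow_mul] at lte
  have hv_val : padicValNat p v = 0 := padicValNat.eq_zero_of_not_dvd (ZMod.not_dvd_orderOf ha0)
  simp only [Nat.factorization_def _ hp.out, lte, padicValNat.mul hv hm, hv_val, zero_add]

open scoped Classical in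
theorem Nat.primeFactors_two_pow_sub_one {n : ℕ} (hn : n ≠ 0) :
    (2 ^ n - 1).primeFactors = (Finset.range (2 ^ n)).filter
      (fun p => p.Prime ∧ Odd p ∧ orderOf (2 : ZMod p) ∣ n) := by
  have hM : 2 ^ n - 1 ≠ 0 := Nat.sub_ne_zero_of_lt (Nat.one_lt_two_pow hn)
  have hM_odd : Odd (2 ^ n - 1) :=
    Nat.Even.sub_odd Nat.one_le_two_pow ((Nat.even_pow' hn).mpr even_two) odd_one
  have hdvd_iff (p : ℕ) : p ∣ 2 ^ n - 1 ↔ orderOf (2 : ZMod p) ∣ n := by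
    rw [Nat.dvd_pow_sub_one_iff_natCast_pow_eq_one two_pos, orderOf_dvd_iff_pow_eq_one,
      Nat.cast_ofNat]
  ext p
  simp only [Finset.mem_filter, Finset.mem_range, Nat.mem_primeFactors, ← hdvd_iff]
  constructor
  · rintro ⟨hp, hdvd, -⟩
    refine ⟨(Nat.le_of_dvd (by omega) hdvd).trans_lt (by omega), hp, hp.odd_of_ne_two ?_, hdvd⟩
    rintro rfl
    exact Nat.not_even_iff_odd.mpr hM_odd (even_iff_two_dvd.mpr hdvd)
  · rintro ⟨-, hp, -, hdvd⟩
    exact ⟨hp, hdvd, hM⟩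

open scoped Classical in
theorem mersenne_factorization (n : ℕ) (hn : 1 ≤ n) :
    2 ^ n - 1 =
      ∏ p ∈ (Finset.range (2 ^ n)).filter
        (fun p => p.Prime ∧ Odd p ∧ orderOf (2 : ZMod p) ∣ n),
        p ^ (wieferichExp p + n.factorization p) := by
  have hn0 : n ≠ 0 := by omega
  calc 2 ^ n - 1 = ∏ p ∈ (2 ^ n - 1).primeFactors, p ^ (2 ^ n - 1).factorization p :=
        Nat.prod_primeFactors_pow_factorization (Nat.sub_ne_zero_of_lt (Nat.one_lt_two_pow hn0))
    _ = _ := by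
      rw [Nat.primeFactors_two_pow_sub_one hn0]
      refine Finset.prod_congr rfl fun p hp => ?_
      obtain ⟨-, hp, hp_odd, hord⟩ := Finset.mem_filter.mp hp
      have : Fact p.Prime := ⟨hp⟩
      have hp_two : ¬ p ∣ 2 := fun h =>
        Nat.not_even_iff_odd.mpr hp_odd ((Nat.prime_dvd_prime_iff_eq hp Nat.prime_two).mp h ▸ even_two)
      rw [Nat.factorization_pow_sub_one_of_orderOf_dvd hp_odd one_lt_two hp_two
        (by exact_mod_cast hord) hn0]
      norm_cast
end

section
/- Let p be an odd prime with Mersenne order v(p) and Wieferich exponent ε(p), n ≥ 1, and m = ⌊(n-1)/v(p)⌋. Then ord_p(ω(n)) = ε(p)·m - ((n - d_p(n)) - (m - d_p(m)))/(p - 1). -/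
def mersenneFact (m : ℕ) : ℕ := ∏ i ∈ Finset.Icc 1 m, (2 ^ i - 1)

def omegaQ (n : ℕ) : ℚ := 2 ^ (n - 1) * (mersenneFact (n - 1) : ℚ) / (n.factorial : ℚ)

private lemma padicValNat_factorial_sum (p : ℕ) (hp : p.Prime) (x : ℕ) :
    padicValNat p (x.factorial) = ∑ k ∈ Finset.Icc 1 x, padicValNat p k := by
  haveI : Fact p.Prime := ⟨hp⟩
  induction x with
  | zero => simp
  | succ x ih =>
    rw [Finset.sum_Icc_succ_top (by omega), ← ih, Nat.factorial_succ, mul_comm,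
      padicValNat.mul (Nat.factorial_ne_zero x) (by omega)]

theorem padic_val_omega (p : ℕ) (hp : p.Prime) (hodd : Odd p)
    (n : ℕ) (hn : 1 ≤ n) (m : ℕ) (hm : m = (n - 1) / orderOf (2 : ZMod p)) :
    padicValRat p (omegaQ n) =
      (wieferichExp p : ℤ) * m -
        (((n : ℤ) - (Nat.digits p n).sum) - ((m : ℤ) - (Nat.digits p m).sum)) /
          ((p : ℤ) - 1) := by
  haveI : Fact p.Prime := ⟨hp⟩
  have hp2 : p ≠ 2 := by rintro rfl; exact (Nat.not_odd_iff_even.mpr even_two) hodd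
  have hp3 : 3 ≤ p := by
    have := hp.two_le; omega
  set v := orderOf (2 : ZMod p) with hv
  have h2ne : (2 : ZMod p) ≠ 0 := by
    intro h
    have := (ZMod.natCast_eq_zero_iff 2 p).mp (by exact_mod_cast h)
    have := Nat.le_of_dvd (by norm_num) this
    omega
  have hvpos : 0 < v := by
    have hfin : IsOfFinOrder (2 : ZMod p) :=
      isOfFinOrder_iff_pow_eq_one.mpr ⟨p - 1, by omega, ZMod.pow_card_sub_one_eq_one h2ne⟩
    exact hfin.orderOf_pos
  -- divisibility criterion
  have hdvd_iff : ∀ i : ℕ, p ∣ 2 ^ i - 1 ↔ v ∣ i := by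
    intro i
    rw [← ZMod.natCast_eq_zero_iff]
    have h1 : (1 : ℕ) ≤ 2 ^ i := Nat.one_le_two_pow
    rw [Nat.cast_sub h1]
    rw [sub_eq_zero]
    push_cast
    exact Iff.symm orderOf_dvd_iff_pow_eq_one
  have hpd2 : ¬ p ∣ 2 ^ v := by
    intro h
    have h2 := Nat.Prime.dvd_of_dvd_pow hp h
    have := Nat.le_of_dvd (by norm_num) h2
    omega
  have hpdvd : p ∣ 2 ^ v - 1 := (hdvd_iff v).mpr dvd_rfl
  set ε := padicValNat p (2 ^ v - 1) with hε
  have hwief : wieferichExp p = ε := Nat.factorization_def _ hp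
  -- LTE
  have hLTE : ∀ k : ℕ, k ≠ 0 → padicValNat p (2 ^ (v * k) - 1) = ε + padicValNat p k := by
    intro k hk
    have := padicValNat.pow_sub_pow (p := p) hodd (x := 2 ^ v) (y := 1)
      (Nat.one_lt_two_pow (by omega)) (by simpa using hpdvd) hpd2 hk
    simpa [← pow_mul, one_pow] using this
  -- reindex the sum
  have hmul : m * v ≤ n - 1 := by
    rw [hm]; exact Nat.div_mul_le_self _ _
  have hsum : ∑ i ∈ Finset.Icc 1 (n - 1), padicValNat p (2 ^ i - 1)
      = ∑ k ∈ Finset.Icc 1 m, padicValNat p (2 ^ (v * k) - 1) := by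
    have hinj : ∀ a ∈ Finset.Icc 1 m, ∀ b ∈ Finset.Icc 1 m, v * a = v * b → a = b :=
      fun a _ b _ h => Nat.eq_of_mul_eq_mul_left hvpos h
    have himg : ∑ i ∈ (Finset.Icc 1 m).image (fun k => v * k), padicValNat p (2 ^ i - 1)
        = ∑ k ∈ Finset.Icc 1 m, padicValNat p (2 ^ (v * k) - 1) :=
      Finset.sum_image hinj
    rw [← himg]
    refine (Finset.sum_subset ?_ ?_).symm
    · intro i hi
      simp only [Finset.mem_image, Finset.mem_Icc] at hi ⊢
      obtain ⟨k, ⟨hk1, hk2⟩, rfl⟩ := hi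
      constructor
      · exact Nat.one_le_iff_ne_zero.mpr (by positivity)
      · calc v * k ≤ v * m := Nat.mul_le_mul_left v hk2
          _ = m * v := mul_comm _ _
          _ ≤ n - 1 := hmul
    · intro i hi hni
      simp only [Finset.mem_Icc] at hi
      apply padicValNat.eq_zero_of_not_dvd
      intro hd
      obtain ⟨k, rfl⟩ := (hdvd_iff i).mp hd
      apply hni
      simp only [Finset.mem_image, Finset.mem_Icc]
      refine ⟨k, ⟨?_, ?_⟩, rfl⟩
      · rcases Nat.eq_zero_or_pos k with rfl | h; · omega
        exact h
      · rw [hm]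
        refine (Nat.le_div_iff_mul_le hvpos).mpr ?_
        rw [mul_comm]
        exact hi.2
  have hsum2 : ∑ k ∈ Finset.Icc 1 m, padicValNat p (2 ^ (v * k) - 1)
      = m * ε + padicValNat p (m.factorial) := by
    rw [padicValNat_factorial_sum p hp,
      Finset.sum_congr rfl (fun k hk => hLTE k (by simp only [Finset.mem_Icc] at hk; omega)),
      Finset.sum_add_distrib, Finset.sum_const, Nat.card_Icc, smul_eq_mul]
    simp [mul_comm]
  -- valuation of mersenneFact
  have hmfzero : ∀ i ∈ Finset.Icc 1 (n-1), (2 ^ i - 1 : ℕ) ≠ 0 := by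
    intro i hi
    simp only [Finset.mem_Icc] at hi
    have : (1:ℕ) < 2 ^ i := Nat.one_lt_two_pow (by omega)
    omega
  have hmf_ne : (mersenneFact (n - 1) : ℕ) ≠ 0 := Finset.prod_ne_zero_iff.mpr hmfzero
  have hvalmf : padicValNat p (mersenneFact (n - 1))
      = m * ε + padicValNat p (m.factorial) := by
    rw [← hsum2, ← hsum, ← Nat.factorization_def _ hp, mersenneFact,
      Nat.factorization_prod hmfzero]
    rw [Finset.sum_apply']
    exact Finset.sum_congr rfl fun i _ => Nat.factorization_def _ hp
  -- valuation of omegaQ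
  have h2q : ((2 : ℚ) ^ (n - 1)) ≠ 0 := by positivity
  have hmfq : ((mersenneFact (n - 1) : ℚ)) ≠ 0 := by exact_mod_cast hmf_ne
  have hfq : ((n.factorial : ℚ)) ≠ 0 := by exact_mod_cast n.factorial_ne_zero
  have hval2 : padicValRat p ((2 : ℚ) ^ (n - 1)) = 0 := by
    have : ((2 : ℚ) ^ (n - 1)) = ((2 ^ (n - 1) : ℕ) : ℚ) := by push_cast; ring
    rw [this, padicValRat.of_nat]
    have : padicValNat p (2 ^ (n - 1)) = 0 :=
      padicValNat.eq_zero_of_not_dvd (by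
        intro h
        have := Nat.Prime.dvd_of_dvd_pow hp h
        have := Nat.le_of_dvd (by norm_num) this
        omega)
    simp [this]
  have hLHS : padicValRat p (omegaQ n) =
      (padicValNat p (mersenneFact (n - 1)) : ℤ) - (padicValNat p n.factorial : ℤ) := by
    rw [omegaQ, padicValRat.div (mul_ne_zero h2q hmfq) hfq,
      padicValRat.mul h2q hmfq, hval2, padicValRat.of_nat, padicValRat.of_nat]
    ring
  -- Legendre in ℤ
  set A := padicValNat p n.factorial with hA
  set B := padicValNat p m.factorial with hB
  have hLegN : ((p : ℤ) - 1) * A = (n : ℤ) - (Nat.digits p n).sum := by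
    have h1 := sub_one_mul_padicValNat_factorial (p := p) n
    have h2 := Nat.digit_sum_le p n
    have h3 := congrArg (Nat.cast : ℕ → ℤ) h1
    rw [Nat.cast_mul, Nat.cast_sub hp.one_le, Nat.cast_sub h2, Nat.cast_one] at h3
    exact h3
  have hLegM : ((p : ℤ) - 1) * B = (m : ℤ) - (Nat.digits p m).sum := by
    have h1 := sub_one_mul_padicValNat_factorial (p := p) m
    have h2 := Nat.digit_sum_le p m
    have h3 := congrArg (Nat.cast : ℕ → ℤ) h1
    rw [Nat.cast_mul, Nat.cast_sub hp.one_le, Nat.cast_sub h2, Nat.cast_one] at h3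
    exact h3
  have hnum : (((n : ℤ) - (Nat.digits p n).sum) - ((m : ℤ) - (Nat.digits p m).sum))
      = ((p : ℤ) - 1) * ((A : ℤ) - B) := by
    rw [← hLegN, ← hLegM]; ring
  have hpne : ((p : ℤ) - 1) ≠ 0 := by
    have : (3 : ℤ) ≤ p := by exact_mod_cast hp3
    omega
  rw [hLHS, hvalmf, hwief, hnum, Int.mul_ediv_cancel_left _ hpne]
  push_cast
  ring
end

section
/- For every positive integer n, ω(n) := 2^{n-1}·∏_{i=1}^{n-1}(2^i - 1)/n! is a positive integer. -/
/-!
It suffices to show `n! ∣ 2^(n-1) F(n-1)` prime by prime. Legendre's formula gives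
`(p - 1) v_p(n!) ≤ n - 1`. For `p = 2` the factor `2^(n-1)` absorbs `v_2(n!)`. For odd `p`,
let `d` be the order of `2` modulo `p`: then `p ∣ 2^i - 1` for each of the `⌊(n-1)/d⌋`
multiples `i` of `d` in `[1, n-1]`, and `d ∣ p - 1` gives
`v_p(n!) ≤ ⌊(n-1)/(p-1)⌋ ≤ ⌊(n-1)/d⌋`.
-/

open Nat

lemma sub_one_mul_padicValNat_factorial_le_pred (p n : ℕ) [Fact p.Prime] :
    (p - 1) * padicValNat p n ! ≤ n - 1 := by
  rcases eq_or_ne n 0 with rfl | hn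
  · simp
  · have := sub_one_mul_padicValNat_factorial_lt_of_ne_zero p hn
    omega

lemma dvd_pow_sub_one_of_orderOf_dvd {a n i : ℕ} (h : orderOf (a : ZMod n) ∣ i) :
    n ∣ a ^ i - 1 := by
  rcases eq_or_ne (a ^ i) 0 with h0 | h0
  · simp [h0]
  have hpow : ((a ^ i : ℕ) : ZMod n) = ((1 : ℕ) : ZMod n) := by
    push_cast
    exact orderOf_dvd_iff_pow_eq_one.mp h
  exact (Nat.modEq_iff_dvd' (one_le_iff_ne_zero.mpr h0)).mp
    ((ZMod.natCast_eq_natCast_iff _ _ _).mp hpow).symm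

lemma mersenneFact_pos (m : ℕ) : 0 < mersenneFact m :=
  Finset.prod_pos fun _ hi =>
    Nat.sub_pos_of_lt (Nat.one_lt_two_pow (Nat.one_le_iff_ne_zero.mp (Finset.mem_Icc.mp hi).1))

lemma pow_div_orderOf_dvd_mersenneFact (p m : ℕ) :
    p ^ (m / orderOf (2 : ZMod p)) ∣ mersenneFact m := by
  set d := orderOf (2 : ZMod p)
  let multiples := {i ∈ Finset.Ioc 0 m | d ∣ i}
  calc p ^ (m / d) = ∏ _i ∈ multiples, p := by
        rw [Finset.prod_const, Nat.Ioc_filter_dvd_card_eq_div]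
    _ ∣ ∏ i ∈ multiples, (2 ^ i - 1) :=
        Finset.prod_dvd_prod_of_dvd _ _ fun i hi =>
          dvd_pow_sub_one_of_orderOf_dvd (Finset.mem_filter.mp hi).2
    _ ∣ mersenneFact m := by
        rw [mersenneFact, show Finset.Icc 1 m = Finset.Ioc 0 m from
          Finset.Icc_add_one_left_eq_Ioc 0 m]
        exact Finset.prod_dvd_prod_of_subset _ _ _ (Finset.filter_subset _ _)

lemma padicValNat_factorial_le_div_orderOf_two {p : ℕ} [hp : Fact p.Prime] (hp2 : p ≠ 2)
    (n : ℕ) : padicValNat p n ! ≤ (n - 1) / orderOf (2 : ZMod p) := by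
  have htwo : (2 : ZMod p) ≠ 0 := Ring.two_ne_zero (by rwa [ZMod.ringChar_zmod_n])
  have hp1 : 0 < p - 1 := Nat.sub_pos_of_lt hp.out.one_lt
  have hd := ZMod.orderOf_dvd_card_sub_one htwo
  calc padicValNat p n ! ≤ (n - 1) / (p - 1) :=
        (Nat.le_div_iff_mul_le hp1).mpr
          (by rw [mul_comm]; exact sub_one_mul_padicValNat_factorial_le_pred p n)
    _ ≤ (n - 1) / orderOf (2 : ZMod p) :=
        Nat.div_le_div_left (Nat.le_of_dvd hp1 hd) (Nat.pos_of_dvd_of_pos hd hp1)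

lemma pow_padicValNat_factorial_dvd (p n : ℕ) [Fact p.Prime] :
    p ^ padicValNat p n ! ∣ 2 ^ (n - 1) * mersenneFact (n - 1) := by
  rcases eq_or_ne p 2 with rfl | hp2
  · have := sub_one_mul_padicValNat_factorial_le_pred 2 n
    exact Dvd.dvd.mul_right (pow_dvd_pow 2 (by simpa using this)) _
  · exact Dvd.dvd.mul_left ((pow_dvd_pow p (padicValNat_factorial_le_div_orderOf_two hp2 n)).trans
      (pow_div_orderOf_dvd_mersenneFact p (n - 1))) _

theorem factorial_dvd_two_pow_mul_mersenneFact (n : ℕ) :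
    n ! ∣ 2 ^ (n - 1) * mersenneFact (n - 1) := by
  refine (Nat.dvd_iff_prime_pow_dvd_dvd _ _).mpr fun p k hp hpk => ?_
  have := Fact.mk hp
  exact (pow_dvd_pow p ((padicValNat_dvd_iff_le n.factorial_ne_zero).mp hpk)).trans
    (pow_padicValNat_factorial_dvd p n)

theorem omega_is_pos_integer_general (n : ℕ) :
    ∃ k : ℕ, 0 < k ∧ omegaQ n = (k : ℚ) := by
  have hdvd := factorial_dvd_two_pow_mul_mersenneFact n
  have hpos : 0 < 2 ^ (n - 1) * mersenneFact (n - 1) :=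
    Nat.mul_pos (by positivity) (mersenneFact_pos _)
  refine ⟨2 ^ (n - 1) * mersenneFact (n - 1) / n !,
    Nat.div_pos (Nat.le_of_dvd hpos hdvd) n.factorial_pos, ?_⟩
  rw [Nat.cast_div hdvd (by positivity), omegaQ]
  push_cast
  rfl

theorem omega_is_pos_integer (n : ℕ) (hn : 1 ≤ n) :
    ∃ k : ℕ, 0 < k ∧ omegaQ n = (k : ℚ) :=
  omega_is_pos_integer_general n
end

section
/- For an odd prime p and positive integer n with m = ⌊(n-1)/v(p)⌋, ord_p(∏_{i=1}^{n-1}(2^i - 1)) = ε(p)·m + (m - d_p(m))/(p - 1). -/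
/-!
Only the factors `2 ^ i - 1` with `v ∣ i` are divisible by `p`, where `v` is the order of `2`
mod `p`. Writing `i = v * j` with `1 ≤ j ≤ m`, lifting the exponent gives
`ord_p (2 ^ (v * j) - 1) = ε(p) + ord_p j`, so the valuation is `ε(p) * m + ord_p (m !)`, and
Legendre's formula evaluates `ord_p (m !)` as `(m - d_p m) / (p - 1)`.
-/

open Finset
open scoped Nat

theorem Finset.sum_Icc_eq_sum_Icc_div_of_support_dvd {M : Type*} [AddCommMonoid M] {f : ℕ → M}
    {d : ℕ} (hd : 0 < d) (hf : ∀ i, ¬d ∣ i → f i = 0) (N : ℕ) :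
    ∑ i ∈ Icc 1 N, f i = ∑ j ∈ Icc 1 (N / d), f (d * j) := by
  have hmultiples : {i ∈ Icc 1 N | d ∣ i} = (Icc 1 (N / d)).image (d * ·) := by
    ext i
    simp only [mem_filter, mem_image, mem_Icc, Nat.le_div_iff_mul_le hd]
    constructor
    · rintro ⟨⟨hi1, hiN⟩, j, rfl⟩
      exact ⟨j, ⟨Nat.pos_of_mul_pos_left hi1, by rwa [mul_comm]⟩, rfl⟩
    · rintro ⟨j, ⟨hj1, hjN⟩, rfl⟩
      exact ⟨⟨Nat.mul_pos hd hj1, by rwa [mul_comm]⟩, dvd_mul_right d j⟩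
  rw [← sum_filter_of_ne fun i _ hi => not_imp_comm.mp (hf i) hi, hmultiples,
    sum_image fun _ _ _ _ h => Nat.eq_of_mul_eq_mul_left hd h]

theorem Nat.dvd_pow_sub_one_iff_orderOf_dvd {a : ℕ} (ha : a ≠ 0) (n k : ℕ) :
    n ∣ a ^ k - 1 ↔ orderOf (a : ZMod n) ∣ k := by
  rw [← ZMod.natCast_eq_zero_iff, Nat.cast_sub (Nat.one_le_pow _ _ (Nat.pos_of_ne_zero ha)),
    Nat.cast_pow, Nat.cast_one, sub_eq_zero, orderOf_dvd_iff_pow_eq_one]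

theorem Nat.factorization_pow_sub_one {p a : ℕ} (hp : p.Prime) (hodd : Odd p) (ha : 1 < a)
    (hpa : p ∣ a - 1) {j : ℕ} (hj : j ≠ 0) :
    (a ^ j - 1).factorization p = (a - 1).factorization p + j.factorization p := by
  have := Fact.mk hp
  have hp_not_dvd : ¬p ∣ a := fun h =>
    hp.one_lt.ne' (Nat.dvd_one.mp (by simpa [Nat.sub_sub_self ha.le] using Nat.dvd_sub h hpa))
  have hLTE := Nat.emultiplicity_pow_sub_pow hp hodd hpa hp_not_dvd j
  rw [one_pow] at hLTE
  have hpow : a ^ j - 1 ≠ 0 := Nat.sub_ne_zero_of_lt (Nat.one_lt_pow hj ha)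
  rw [← padicValNat_eq_emultiplicity hpow,
    ← padicValNat_eq_emultiplicity (Nat.sub_ne_zero_of_lt ha), ← padicValNat_eq_emultiplicity hj,
    ← Nat.cast_add, Nat.cast_inj] at hLTE
  simp only [Nat.factorization_def _ hp, hLTE]

theorem Nat.factorization_factorial_eq_div {p : ℕ} (hp : p.Prime) (m : ℕ) :
    (m !).factorization p = (m - (p.digits m).sum) / (p - 1) :=
  (Nat.div_eq_of_eq_mul_left (Nat.sub_pos_of_lt hp.one_lt)
    (by rw [← sub_one_mul_factorization_factorial hp, mul_comm])).symm

theorem Nat.factorization_factorial_eq_sum (m p : ℕ) :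
    (m !).factorization p = ∑ j ∈ Icc 1 m, j.factorization p := by
  rw [← prod_Ico_id_eq_factorial, Ico_add_one_right_eq_Icc,
    factorization_prod_apply fun j hj => Nat.one_le_iff_ne_zero.mp (mem_Icc.mp hj).1]

theorem factorization_mersenneFact (N p : ℕ) :
    (mersenneFact N).factorization p = ∑ i ∈ Icc 1 N, (2 ^ i - 1).factorization p :=
  Nat.factorization_prod_apply fun _ hi =>
    Nat.sub_ne_zero_of_lt (Nat.one_lt_two_pow (Nat.one_le_iff_ne_zero.mp (mem_Icc.mp hi).1))

theorem orderOf_two_zmod_pos {p : ℕ} (hp : p.Prime) (hodd : Odd p) :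
    0 < orderOf (2 : ZMod p) := by
  have := Fact.mk hp
  have h2 : (2 : ZMod p) ≠ 0 :=
    Ring.two_ne_zero ((ZMod.ringChar_zmod_n p).trans_ne (hodd.ne_two_of_dvd_nat dvd_rfl))
  exact Nat.pos_of_dvd_of_pos (ZMod.orderOf_dvd_card_sub_one h2) (Nat.sub_pos_of_lt hp.one_lt)

theorem factorization_two_pow_sub_one_eq_zero {p i : ℕ} (hi : ¬orderOf (2 : ZMod p) ∣ i) :
    (2 ^ i - 1).factorization p = 0 :=
  Nat.factorization_eq_zero_of_not_dvd fun h => hi (by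
    simpa using (Nat.dvd_pow_sub_one_iff_orderOf_dvd two_ne_zero p i).mp h)

theorem factorization_two_pow_orderOf_mul_sub_one {p : ℕ} (hp : p.Prime) (hodd : Odd p) {j : ℕ}
    (hj : j ≠ 0) :
    (2 ^ (orderOf (2 : ZMod p) * j) - 1).factorization p = wieferichExp p + j.factorization p := by
  have hpv : p ∣ 2 ^ orderOf (2 : ZMod p) - 1 := by
    simpa using (Nat.dvd_pow_sub_one_iff_orderOf_dvd two_ne_zero p _).mpr dvd_rfl
  rw [pow_mul]
  exact Nat.factorization_pow_sub_one hp hodd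
    (Nat.one_lt_two_pow (orderOf_two_zmod_pos hp hodd).ne') hpv hj

theorem padic_val_mersenne_fact_general (p : ℕ) (hp : p.Prime) (hodd : Odd p)
    (n : ℕ) (m : ℕ) (hm : m = (n - 1) / orderOf (2 : ZMod p)) :
    (mersenneFact (n - 1)).factorization p =
      wieferichExp p * m + (m - (Nat.digits p m).sum) / (p - 1) := by
  rw [factorization_mersenneFact,
    sum_Icc_eq_sum_Icc_div_of_support_dvd (orderOf_two_zmod_pos hp hodd)
      fun _ => factorization_two_pow_sub_one_eq_zero, ← hm,
    ← Nat.factorization_factorial_eq_div hp, Nat.factorization_factorial_eq_sum,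
    sum_congr rfl fun j hj => factorization_two_pow_orderOf_mul_sub_one hp hodd
      (Nat.one_le_iff_ne_zero.mp (mem_Icc.mp hj).1),
    sum_add_distrib, sum_const, Nat.card_Icc, Nat.add_sub_cancel, smul_eq_mul, mul_comm]

theorem padic_val_mersenne_fact (p : ℕ) (hp : p.Prime) (hodd : Odd p)
    (n : ℕ) (hn : 1 ≤ n) (m : ℕ) (hm : m = (n - 1) / orderOf (2 : ZMod p)) :
    (mersenneFact (n - 1)).factorization p =
      wieferichExp p * m + (m - (Nat.digits p m).sum) / (p - 1) :=
  padic_val_mersenne_fact_general p hp hodd n m hm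
end

section
/- Define a: M → ℚ on the free magma M on one generator x by a(x) = 1 and a(t₁·t₂) = a(t₁)a(t₂)/(2^n - 2) where n = deg(t₁·t₂). Then for every n ≥ 1, the sum of a(t) over all t ∈ M of degree n equals 1/n!. -/
/-!
Splitting a tree of degree `n ≥ 2` at its root shows that `S n = ∑_{deg t = n} a t` satisfies
`S 1 = 1` and `(2 ^ n - 2) S n = ∑_{i + j = n} S i S j`. The sequence `1 / n!` satisfies the same
recursion, since `∑_{0 < i < n} n.choose i = 2 ^ n - 2`.
-/

/-- Degree of a tree in the free magma on one generator. -/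
def deg : FreeMagma Unit → ℕ
  | FreeMagma.of _ => 1
  | FreeMagma.mul t₁ t₂ => deg t₁ + deg t₂

/-- Coefficients of the non-associative exponential. -/
def expCoeff : FreeMagma Unit → ℚ
  | FreeMagma.of _ => 1
  | FreeMagma.mul t₁ t₂ =>
      expCoeff t₁ * expCoeff t₂ / (2 ^ (deg (FreeMagma.mul t₁ t₂)) - 2)

open Finset Nat Pointwise

section Binomial

variable {K : Type*} [Field K] [CharZero K]

theorem sum_antidiagonal_inv_factorial_mul (m : ℕ) :
    ∑ p ∈ antidiagonal m, ((p.1 ! : K) * p.2 !)⁻¹ = 2 ^ m / m ! := by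
  rw [eq_div_iff (by exact_mod_cast m.factorial_ne_zero), sum_mul,
    show (2 : K) = 1 + 1 by norm_num, (Commute.one_right 1).add_pow']
  refine sum_congr rfl fun p hp => ?_
  rw [← mem_antidiagonal.mp hp, nsmul_eq_mul, cast_add_choose]
  simp [div_eq_inv_mul]

theorem sum_antidiagonal_inv_factorial_succ_mul (n : ℕ) :
    ∑ p ∈ antidiagonal n, (((p.1 + 1) ! : K) * (p.2 + 1) !)⁻¹ = (2 ^ (n + 2) - 2) / (n + 2) ! := by
  have h := sum_antidiagonal_inv_factorial_mul (K := K) (n + 2)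
  rw [Nat.sum_antidiagonal_succ, Nat.sum_antidiagonal_succ'] at h
  rw [sub_div, ← h]
  simp only [mul_inv_rev, factorial_zero, cast_one, one_mul, mul_one]
  ring

end Binomial

namespace FreeMagma

variable {α : Type*}

@[simp]
theorem of_ne_mul (x : α) (a b : FreeMagma α) : of x ≠ a * b := nofun

@[simp]
theorem mul_inj {a b c d : FreeMagma α} : a * b = c * d ↔ a = c ∧ b = d :=
  ⟨fun h => by cases h; simp, by rintro ⟨rfl, rfl⟩; rfl⟩

end FreeMagma

@[simp]
theorem deg_of (u : Unit) : deg (FreeMagma.of u) = 1 := rfl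

@[simp]
theorem deg_mul (t₁ t₂ : FreeMagma Unit) : deg (t₁ * t₂) = deg t₁ + deg t₂ := rfl

theorem one_le_deg (t : FreeMagma Unit) : 1 ≤ deg t := by
  induction t with
  | ih1 => simp
  | ih2 => simp only [deg_mul]; omega

theorem expCoeff_mul (t₁ t₂ : FreeMagma Unit) :
    expCoeff (t₁ * t₂) = expCoeff t₁ * expCoeff t₂ / (2 ^ deg (t₁ * t₂) - 2) := rfl

def treesOfDeg : ℕ → Finset (FreeMagma Unit)
  | 0 => ∅
  | 1 => {FreeMagma.of ()}
  | n + 2 => (antidiagonal n).attach.biUnion fun p =>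
      treesOfDeg (p.1.1 + 1) * treesOfDeg (p.1.2 + 1)
  decreasing_by all_goals have := mem_antidiagonal.mp p.2; omega

theorem mem_treesOfDeg {n : ℕ} {t : FreeMagma Unit} : t ∈ treesOfDeg n ↔ deg t = n := by
  induction t generalizing n with
  | ih1 => match n with
    | 0 | 1 | n + 2 => simp [treesOfDeg, mem_mul]
  | ih2 t₁ t₂ ih₁ ih₂ =>
    have hd₁ := one_le_deg t₁
    have hd₂ := one_le_deg t₂
    match n with
    | 0 | 1 =>
      simp only [treesOfDeg, notMem_empty, mem_singleton, reduceCtorEq, deg_mul, false_iff]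
      omega
    | n + 2 =>
      simp only [treesOfDeg, mem_biUnion, mem_attach, true_and, mem_mul, FreeMagma.mul_inj,
        deg_mul]
      constructor
      · rintro ⟨⟨⟨i, j⟩, hij⟩, _, h₁, _, h₂, rfl, rfl⟩
        rw [ih₁] at h₁
        rw [ih₂] at h₂
        have := mem_antidiagonal.mp hij
        simp only at h₁ h₂ this
        omega
      · intro h
        exact ⟨⟨(deg t₁ - 1, deg t₂ - 1), mem_antidiagonal.mpr (by omega)⟩,
          t₁, ih₁.mpr (Nat.sub_add_cancel hd₁).symm, t₂, ih₂.mpr (Nat.sub_add_cancel hd₂).symm,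
          rfl, rfl⟩

theorem sum_treesOfDeg_add_two {M : Type*} [AddCommMonoid M] (f : FreeMagma Unit → M) (n : ℕ) :
    ∑ t ∈ treesOfDeg (n + 2), f t = ∑ p ∈ antidiagonal n,
      ∑ t₁ ∈ treesOfDeg (p.1 + 1), ∑ t₂ ∈ treesOfDeg (p.2 + 1), f (t₁ * t₂) := by
  have hdisj : ((antidiagonal n).attach : Set {p // p ∈ antidiagonal n}).PairwiseDisjoint
      fun p => treesOfDeg (p.1.1 + 1) * treesOfDeg (p.1.2 + 1) := by
    intro p _ q _ hpq
    refine disjoint_left.mpr ?_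
    simp only [mem_mul]
    rintro _ ⟨a, ha, b, -, rfl⟩ ⟨c, hc, d, -, hcd⟩
    obtain ⟨rfl, rfl⟩ := FreeMagma.mul_inj.mp hcd
    rw [mem_treesOfDeg] at ha hc
    have := mem_antidiagonal.mp p.2
    have := mem_antidiagonal.mp q.2
    exact hpq (Subtype.ext (Prod.ext (by omega) (by omega)))
  rw [treesOfDeg, sum_biUnion hdisj, ← sum_attach (antidiagonal n)]
  refine sum_congr rfl fun p _ => ?_
  rw [← image_mul_product, sum_image fun x _ y _ h => Prod.ext_iff.mpr (FreeMagma.mul_inj.mp h),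
    sum_product]

theorem sum_expCoeff_treesOfDeg_succ (n : ℕ) :
    ∑ t ∈ treesOfDeg (n + 1), expCoeff t = ((n + 1)! : ℚ)⁻¹ := by
  induction n using Nat.strong_induction_on with
  | _ n ih =>
  match n with
  | 0 => simp [treesOfDeg, expCoeff]
  | n + 1 =>
    have hpos : (2 : ℚ) ^ (n + 2) - 2 ≠ 0 :=
      sub_ne_zero.mpr (lt_self_pow₀ one_lt_two (by omega)).ne'
    calc ∑ t ∈ treesOfDeg (n + 2), expCoeff t
        = ∑ p ∈ antidiagonal n, ∑ t₁ ∈ treesOfDeg (p.1 + 1), ∑ t₂ ∈ treesOfDeg (p.2 + 1),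
            expCoeff t₁ * expCoeff t₂ / (2 ^ (n + 2) - 2) := by
          rw [sum_treesOfDeg_add_two]
          refine sum_congr rfl fun p hp => sum_congr rfl fun t₁ h₁ => sum_congr rfl fun t₂ h₂ => ?_
          have := mem_antidiagonal.mp hp
          rw [expCoeff_mul, deg_mul, mem_treesOfDeg.mp h₁, mem_treesOfDeg.mp h₂,
            show p.1 + 1 + (p.2 + 1) = n + 2 by omega]
      _ = ∑ p ∈ antidiagonal n,
            (∑ t₁ ∈ treesOfDeg (p.1 + 1), expCoeff t₁) * (∑ t₂ ∈ treesOfDeg (p.2 + 1), expCoeff t₂)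
              / (2 ^ (n + 2) - 2) := by
          simp only [sum_mul_sum, sum_div]
      _ = ∑ p ∈ antidiagonal n, (((p.1 + 1) ! : ℚ) * (p.2 + 1) !)⁻¹ / (2 ^ (n + 2) - 2) := by
          refine sum_congr rfl fun p hp => ?_
          have := mem_antidiagonal.mp hp
          rw [ih p.1 (by omega), ih p.2 (by omega), mul_inv]
      _ = ((n + 2)! : ℚ)⁻¹ := by
          rw [← sum_div, sum_antidiagonal_inv_factorial_succ_mul]
          field_simp

theorem sum_expCoeff_eq (n : ℕ) (hn : 1 ≤ n) :
    ∑ᶠ t ∈ {t : FreeMagma Unit | deg t = n}, expCoeff t = 1 / (n.factorial : ℚ) := by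
  obtain ⟨n, rfl⟩ := Nat.exists_eq_add_of_le' hn
  have hset : {t : FreeMagma Unit | deg t = n + 1} = ↑(treesOfDeg (n + 1)) := by
    ext t
    simp [mem_treesOfDeg]
  rw [hset, finsum_mem_coe_finset, sum_expCoeff_treesOfDeg_succ, one_div]
end
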